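/- (Strict cost decrease away from equilibrium) Suppose the flow vector f : K → ℝ satisfies f k ≥ 0 for all k and f is not a Wardrop user equilibrium with respect to C. Then the aggregate travel cost strictly decreases under one discrete NPSD step: Σ_{k ∈ K} C k · (f′ k − f k) < 0. -/

import Mathlib

/-! Flow only ever moves from a route to a strictly cheaper route of the same OD pair, so the
change of aggregate cost is `∑ p k, f p * ρ p k * (C k - C p)`, a sum of nonpositive terms.
Away from equilibrium some used route `k` has a cheaper alternative `p`; for `θ > 0` the
protocol gives `ρ k p > 0`, so that term is strictly negative. -/

open Finset

open Classical in
noncomputable def Rset {W K : Type*} [Fintype K] (od : K → W) (C : K → ℝ) (k : K) :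
    Finset K :=
  Finset.univ.filter (fun p => od p = od k ∧ C p < C k)

open Classical in
noncomputable def rho {W K : Type*} [Fintype K] (od : K → W) (C : K → ℝ) (θ : W → ℝ)
    (k p : K) : ℝ :=
  if od p = od k ∧ (Rset od C k).Nonempty then
    max 0 ((1 - Real.exp (-θ (od k) * (C k - C p))) / (Rset od C k).card)
  else 0

noncomputable def npsdStep {W K : Type*} [Fintype K] (od : K → W) (C : K → ℝ) (θ : W → ℝ)
    (f : K → ℝ) (k : K) : ℝ :=
  f k + (∑ p, f p * rho od C θ p k) - f k * ∑ p, rho od C θ k p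

theorem sum_cost_mul_transfer_sub {K : Type*} [Fintype K] (C f : K → ℝ) (ρ : K → K → ℝ) :
    ∑ k, C k * ((f k + ∑ p, f p * ρ p k - f k * ∑ p, ρ k p) - f k) =
      ∑ p, ∑ k, f p * ρ p k * (C k - C p) := by
  calc ∑ k, C k * ((f k + ∑ p, f p * ρ p k - f k * ∑ p, ρ k p) - f k)
      = ∑ k, ∑ p, C k * f p * ρ p k - ∑ k, ∑ p, C k * f k * ρ k p := by
        rw [← sum_sub_distrib]
        refine sum_congr rfl fun k _ => ?_
        simp only [mul_assoc, ← mul_sum]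
        ring
    _ = ∑ p, ∑ k, f p * ρ p k * (C k - C p) := by
        rw [sum_comm (f := fun k p => C k * f p * ρ p k), ← sum_sub_distrib]
        refine sum_congr rfl fun p _ => ?_
        rw [← sum_sub_distrib]
        exact sum_congr rfl fun k _ => by ring

section Protocol

variable {W K : Type*} [Fintype K] (od : K → W) (C : K → ℝ) (θ : W → ℝ)

theorem rho_nonneg (k p : K) : 0 ≤ rho od C θ k p := by
  unfold rho
  split_ifs
  exacts [le_max_left _ _, le_rfl]

variable {od C θ}

theorem cost_lt_of_rho_pos {k p : K} (hθ : 0 ≤ θ (od k)) (hρ : 0 < rho od C θ k p) :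
    C p < C k := by
  by_contra! hle
  have hexp : 1 ≤ Real.exp (-θ (od k) * (C k - C p)) :=
    Real.one_le_exp (by nlinarith)
  have hquot : (1 - Real.exp (-θ (od k) * (C k - C p))) / (Rset od C k).card ≤ 0 :=
    div_nonpos_of_nonpos_of_nonneg (by linarith) (Nat.cast_nonneg _)
  unfold rho at hρ
  split_ifs at hρ
  · exact (max_le le_rfl hquot).not_gt hρ
  · exact hρ.false

theorem rho_pos_of_mem_Rset {k p : K} (hθ : 0 < θ (od k)) (hp : p ∈ Rset od C k) :
    0 < rho od C θ k p := by
  classical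
  have hp' : od p = od k ∧ C p < C k := by simpa [Rset] using hp
  have hexp : Real.exp (-θ (od k) * (C k - C p)) < 1 :=
    Real.exp_lt_one_iff.mpr (by nlinarith)
  have hcard : (0 : ℝ) < (Rset od C k).card := by exact_mod_cast card_pos.mpr ⟨p, hp⟩
  unfold rho
  rw [if_pos ⟨hp'.1, p, hp⟩]
  exact lt_max_of_lt_right (div_pos (by linarith) hcard)

theorem rho_mul_cost_sub_nonpos {k p : K} (hθ : 0 ≤ θ (od k)) :
    rho od C θ k p * (C p - C k) ≤ 0 := by
  rcases (rho_nonneg od C θ k p).eq_or_lt with h | h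
  · simp [← h]
  · exact mul_nonpos_of_nonneg_of_nonpos h.le (sub_nonpos.mpr (cost_lt_of_rho_pos hθ h).le)

end Protocol

theorem npsd_strict_decrease_away_from_equilibrium_general {W K : Type*} [Fintype K]
    (od : K → W) (C : K → ℝ) (θ : W → ℝ)
    (hθ : ∀ w, 0 < θ w) (f : K → ℝ) (hf : ∀ k, 0 ≤ f k)
    (hne : ¬ (∀ k p : K, od p = od k → 0 < f k → C k ≤ C p)) :
    ∑ k, C k * (npsdStep od C θ f k - f k) < 0 := by
  classical
  push Not at hne
  obtain ⟨k₀, p₀, hod, hfk, hC⟩ := hne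
  have hterm : ∀ p k, f p * rho od C θ p k * (C k - C p) ≤ 0 := fun p k => by
    rw [mul_assoc]
    exact mul_nonpos_of_nonneg_of_nonpos (hf p) (rho_mul_cost_sub_nonpos (hθ _).le)
  have hρ : 0 < rho od C θ k₀ p₀ :=
    rho_pos_of_mem_Rset (hθ _) (by simp [Rset, hod, hC])
  have hwit : f k₀ * rho od C θ k₀ p₀ * (C p₀ - C k₀) < 0 :=
    mul_neg_of_pos_of_neg (mul_pos hfk hρ) (sub_neg.mpr hC)
  unfold npsdStep
  rw [sum_cost_mul_transfer_sub]
  refine sum_neg' (fun p _ => sum_nonpos fun k _ => hterm p k) ⟨k₀, mem_univ _, ?_⟩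
  exact sum_neg' (fun k _ => hterm k₀ k) ⟨p₀, mem_univ _, hwit⟩

theorem npsd_strict_decrease_away_from_equilibrium {W K : Type*} [Fintype W] [Fintype K]
    [Nonempty W] [Nonempty K] (od : K → W) (C : K → ℝ) (θ : W → ℝ)
    (hθ : ∀ w, 0 < θ w) (f : K → ℝ) (hf : ∀ k, 0 ≤ f k)
    (hne : ¬ (∀ k p : K, od p = od k → 0 < f k → C k ≤ C p)) :
    ∑ k, C k * (npsdStep od C θ f k - f k) < 0 :=
  npsd_strict_decrease_away_from_equilibrium_general od C θ hθ f hf hne
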